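/- Let 1/2 < α < 1, Ω the sector of radius 1 and angle π/α, u(r,θ) = (r^{-α} - r^{α}) sin(αθ), and let ϱ(x) denote the distance from x ∈ Ω to the boundary ∂Ω. If β ≥ 1/2, then ∫_Ω ϱ(x)^{-2β} |u(x)|² dx = ∞; i.e. u does not belong to the weighted space L²_{1/ϱ^β}(Ω) for any β ≥ 1/2. -/

import Mathlib

open Real Set Filter Topology MeasureTheory
open scoped ENNReal

noncomputable section

/-- the open circular sector of radius 1 and opening angle π/α. -/
def sector (α : ℝ) : Set (ℝ × ℝ) :=
  {p | ∃ r θ : ℝ, 0 < r ∧ r < 1 ∧ 0 < θ ∧ θ < π / α ∧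
    p = (r * Real.cos θ, r * Real.sin θ)}

/-- polar angle in `[0, 2π)`. -/
def angleOf (p : ℝ × ℝ) : ℝ :=
  if 0 ≤ Complex.arg (p.1 + p.2 * Complex.I) then Complex.arg (p.1 + p.2 * Complex.I)
  else Complex.arg (p.1 + p.2 * Complex.I) + 2 * π

/-- polar radius. -/
def radOf (p : ℝ × ℝ) : ℝ := Real.sqrt (p.1 ^ 2 + p.2 ^ 2)

/-- `u(r,θ) = (r^{-α} - r^{α}) sin(α θ)` in Cartesian coordinates. -/
def uex (α : ℝ) (p : ℝ × ℝ) : ℝ :=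
  (radOf p ^ (-α) - radOf p ^ α) * Real.sin (α * angleOf p)

/-- first partial derivatives -/
def pd1 (u : ℝ × ℝ → ℝ) (p : ℝ × ℝ) : ℝ := deriv (fun t => u (t, p.2)) p.1
def pd2 (u : ℝ × ℝ → ℝ) (p : ℝ × ℝ) : ℝ := deriv (fun t => u (p.1, t)) p.2

/-- second partial derivatives -/
def pd11 (u : ℝ × ℝ → ℝ) (p : ℝ × ℝ) : ℝ :=
  deriv (fun s => deriv (fun t => u (t, p.2)) s) p.1
def pd22 (u : ℝ × ℝ → ℝ) (p : ℝ × ℝ) : ℝ :=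
  deriv (fun s => deriv (fun t => u (p.1, t)) s) p.2

/-- Euclidean norm of the gradient -/
def gradNorm (u : ℝ × ℝ → ℝ) (p : ℝ × ℝ) : ℝ :=
  Real.sqrt ((pd1 u p) ^ 2 + (pd2 u p) ^ 2)

end

/-!
Since `α < 1`, the upper half of the unit disc lies in the sector and the origin is a boundary
point, so `ϱ(x) ≤ r`. For `r ≤ 1/4` one has `r^{-α} - r^α ≥ r^{-α}/2` and, by concavity of `sin`,
`sin (α θ) ≥ α sin θ ≥ y / (2r)`; together with `2α ≥ 1` and `2β ≥ 1` this gives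
`ϱ^{-2β} u² ≥ y² / (16 r⁴)`. On the box `(0, q) × (q, 2q)` the right-hand side is at least
`1 / (400 q²)` while the box has area `q²`, so each of the disjoint boxes with `q = 2^{-(n+4)}`
contributes at least `1/400` to the integral.
-/

lemma norm_ofReal_add_ofReal_mul_I (p : ℝ × ℝ) : ‖(p.1 : ℂ) + p.2 * Complex.I‖ = radOf p :=
  Complex.norm_add_mul_I p.1 p.2

lemma radOf_mul_cos_angleOf (p : ℝ × ℝ) : radOf p * Real.cos (angleOf p) = p.1 := by
  rw [← norm_ofReal_add_ofReal_mul_I, angleOf]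
  split_ifs <;> simp [Complex.norm_mul_cos_arg]

lemma radOf_mul_sin_angleOf (p : ℝ × ℝ) : radOf p * Real.sin (angleOf p) = p.2 := by
  rw [← norm_ofReal_add_ofReal_mul_I, angleOf]
  split_ifs <;> simp [Complex.norm_mul_sin_arg]

lemma radOf_pos_of_snd_pos {p : ℝ × ℝ} (hy : 0 < p.2) : 0 < radOf p :=
  hy.trans_le (Real.le_sqrt_of_sq_le (by nlinarith))

lemma norm_le_radOf (p : ℝ × ℝ) : ‖p‖ ≤ radOf p := by
  refine max_le (Real.le_sqrt_of_sq_le ?_) (Real.le_sqrt_of_sq_le ?_) <;>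
    simp only [Real.norm_eq_abs, sq_abs] <;> nlinarith

lemma angleOf_mem_Ioo_of_snd_pos {p : ℝ × ℝ} (hy : 0 < p.2) : angleOf p ∈ Ioo 0 π := by
  have him : 0 < ((p.1 : ℂ) + p.2 * Complex.I).im := by simpa using hy
  rw [angleOf, if_pos (Complex.arg_nonneg_iff.mpr him.le)]
  refine ⟨(Complex.arg_nonneg_iff.mpr him.le).lt_of_ne fun h => ?_,
    Complex.arg_lt_pi_iff.mpr (Or.inr him.ne')⟩
  exact him.ne' (Complex.arg_eq_zero_iff.mp h.symm).2

lemma sin_angleOf_of_snd_pos {p : ℝ × ℝ} (hy : 0 < p.2) :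
    Real.sin (angleOf p) = p.2 / radOf p := by
  rw [eq_div_iff (radOf_pos_of_snd_pos hy).ne', mul_comm, radOf_mul_sin_angleOf]

lemma radOf_polar {r : ℝ} (hr : 0 ≤ r) (θ : ℝ) : radOf (r * Real.cos θ, r * Real.sin θ) = r := by
  rw [radOf]
  convert Real.sqrt_sq hr using 2
  linear_combination r ^ 2 * Real.cos_sq_add_sin_sq θ

lemma continuous_radOf : Continuous radOf := by
  unfold radOf; fun_prop

section Sector

variable {α : ℝ}

lemma mem_sector_of_snd_pos (hα0 : 0 < α) (hα1 : α ≤ 1) {p : ℝ × ℝ} (hy : 0 < p.2)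
    (hr : radOf p < 1) : p ∈ sector α := by
  obtain ⟨hθ0, hθπ⟩ := angleOf_mem_Ioo_of_snd_pos hy
  have hπ : π ≤ π / α := le_div_self pi_pos.le hα0 hα1
  exact ⟨radOf p, angleOf p, radOf_pos_of_snd_pos hy, hr, hθ0, hθπ.trans_le hπ,
    by rw [radOf_mul_cos_angleOf, radOf_mul_sin_angleOf]⟩

lemma zero_mem_frontier_sector (hα : 0 < α) : (0 : ℝ × ℝ) ∈ frontier (sector α) := by
  set θ := π / (2 * α)
  have hθ : 0 < θ ∧ θ < π / α := by
    constructor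
    · positivity
    · rw [div_lt_div_iff_of_pos_left pi_pos (by positivity) hα]; linarith
  refine ⟨Metric.mem_closure_iff.mpr fun ε hε => ?_, fun h => ?_⟩
  · obtain ⟨r, hr0, hr1, hrε⟩ : ∃ r : ℝ, 0 < r ∧ r < 1 ∧ r < ε :=
      ⟨min ε 1 / 2, by positivity, by linarith [min_le_right ε 1],
        by linarith [min_le_left ε 1]⟩
    refine ⟨(r * Real.cos θ, r * Real.sin θ), ⟨r, θ, hr0, hr1, hθ.1, hθ.2, rfl⟩, ?_⟩
    calc dist 0 (r * Real.cos θ, r * Real.sin θ)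
        ≤ radOf (r * Real.cos θ, r * Real.sin θ) := by
          rw [dist_zero_left]; exact norm_le_radOf _
      _ = r := radOf_polar hr0.le θ
      _ < ε := hrε
  · obtain ⟨r, θ, hr, -, -, -, h0⟩ := interior_subset h
    have hcos : r * Real.cos θ = 0 := (congrArg Prod.fst h0).symm
    have hsin : r * Real.sin θ = 0 := (congrArg Prod.snd h0).symm
    have : r ^ 2 = 0 := by
      linear_combination r * Real.cos θ * hcos + r * Real.sin θ * hsin
        - r ^ 2 * Real.cos_sq_add_sin_sq θ
    exact hr.ne' (pow_eq_zero_iff two_ne_zero |>.mp this)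

lemma infDist_frontier_sector_le_radOf (hα : 0 < α) (p : ℝ × ℝ) :
    Metric.infDist p (frontier (sector α)) ≤ radOf p :=
  calc Metric.infDist p (frontier (sector α)) ≤ dist p 0 :=
        Metric.infDist_le_dist_of_mem (zero_mem_frontier_sector hα)
    _ ≤ radOf p := by rw [dist_zero_right]; exact norm_le_radOf p

lemma infDist_frontier_sector_pos (hα0 : 0 < α) (hα1 : α ≤ 1) {p : ℝ × ℝ} (hy : 0 < p.2)
    (hr : radOf p < 1) : 0 < Metric.infDist p (frontier (sector α)) := by
  have hopen : IsOpen {q : ℝ × ℝ | 0 < q.2 ∧ radOf q < 1} :=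
    (isOpen_lt continuous_const continuous_snd).inter
      (isOpen_lt continuous_radOf continuous_const)
  have hint : p ∈ interior (sector α) :=
    interior_maximal (fun q hq => mem_sector_of_snd_pos hα0 hα1 hq.1 hq.2) hopen ⟨hy, hr⟩
  exact (isClosed_frontier.notMem_iff_infDist_pos ⟨0, zero_mem_frontier_sector hα0⟩).mp
    fun h => h.2 hint

end Sector

lemma mul_sin_le_sin_mul {θ a : ℝ} (hθ0 : 0 ≤ θ) (hθπ : θ ≤ π) (ha0 : 0 ≤ a) (ha1 : a ≤ 1) :
    a * Real.sin θ ≤ Real.sin (a * θ) := by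
  have h := strictConcaveOn_sin_Icc.concaveOn.2 (⟨le_rfl, pi_pos.le⟩ : (0 : ℝ) ∈ Icc 0 π)
    ⟨hθ0, hθπ⟩ (sub_nonneg.mpr ha1) ha0 (sub_add_cancel 1 a)
  simpa [smul_eq_mul] using h

lemma sq_snd_div_le_sq_uex {α : ℝ} (hα1 : 1 / 2 ≤ α) (hα2 : α ≤ 1) {p : ℝ × ℝ} (hy : 0 < p.2)
    (hr : radOf p ≤ 1 / 4) : p.2 ^ 2 / (16 * radOf p ^ 3) ≤ uex α p ^ 2 := by
  set r := radOf p
  have hr0 : 0 < r := radOf_pos_of_snd_pos hy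
  obtain ⟨hθ0, hθπ⟩ := angleOf_mem_Ioo_of_snd_pos hy
  have hsin : p.2 / (2 * r) ≤ Real.sin (α * angleOf p) :=
    calc p.2 / (2 * r) = 1 / 2 * Real.sin (angleOf p) := by
          rw [sin_angleOf_of_snd_pos hy]; ring
      _ ≤ α * Real.sin (angleOf p) :=
          mul_le_mul_of_nonneg_right hα1 (sin_nonneg_of_nonneg_of_le_pi hθ0.le hθπ.le)
      _ ≤ Real.sin (α * angleOf p) := mul_sin_le_sin_mul hθ0.le hθπ.le (by linarith) hα2
  set s := r ^ α
  have hs0 : 0 < s := Real.rpow_pos_of_pos hr0 α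
  have hs2 : s ^ 2 ≤ r :=
    calc s ^ 2 = r ^ (2 * α) := by
          rw [← Real.rpow_natCast, ← Real.rpow_mul hr0.le]; ring_nf
      _ ≤ r ^ (1 : ℝ) := Real.rpow_le_rpow_of_exponent_ge hr0 (by linarith) (by linarith)
      _ = r := Real.rpow_one r
  have hfac : s⁻¹ / 2 ≤ s⁻¹ - s := by
    have hs : s ≤ 1 / 2 := by nlinarith
    have : 2 ≤ s⁻¹ := by rw [le_inv_comm₀ two_pos hs0]; linarith
    linarith
  have hu : uex α p = (s⁻¹ - s) * Real.sin (α * angleOf p) := by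
    rw [uex, Real.rpow_neg hr0.le]
  rw [hu, mul_pow]
  calc p.2 ^ 2 / (16 * r ^ 3) = (4 * r)⁻¹ * (p.2 / (2 * r)) ^ 2 := by field_simp; ring
    _ ≤ (s⁻¹ / 2) ^ 2 * (p.2 / (2 * r)) ^ 2 := by
        gcongr
        rw [div_pow, inv_pow, div_eq_mul_inv, ← mul_inv,
          inv_le_inv₀ (by positivity) (by positivity)]
        linarith
    _ ≤ (s⁻¹ - s) ^ 2 * Real.sin (α * angleOf p) ^ 2 := by gcongr

lemma inv_le_rpow_neg {ρ r γ : ℝ} (hρ : 0 < ρ) (hρr : ρ ≤ r) (hr : r ≤ 1) (hγ : 1 ≤ γ) :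
    r⁻¹ ≤ ρ ^ (-γ) :=
  calc r⁻¹ = r ^ (-1 : ℝ) := (Real.rpow_neg_one r).symm
    _ ≤ r ^ (-γ) := Real.rpow_le_rpow_of_exponent_ge (hρ.trans_le hρr) hr (by linarith)
    _ ≤ ρ ^ (-γ) := Real.rpow_le_rpow_of_nonpos hρ hρr (by linarith)

lemma setLIntegral_eq_top_of_disjoint {X : Type*} [MeasurableSpace X] {μ : Measure X}
    {f : X → ℝ≥0∞} {s : Set X} {S : ℕ → Set X} (hS : ∀ n, MeasurableSet (S n))
    (hdisj : Pairwise (Function.onFun Disjoint S)) (hSs : ∀ n, S n ⊆ s) {c : ℝ≥0∞} (hc : c ≠ 0)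
    (hc_le : ∀ n, c ≤ ∫⁻ x in S n, f x ∂μ) : ∫⁻ x in s, f x ∂μ = ⊤ :=
  top_unique <| calc
    ⊤ = ∑' _ : ℕ, c := (ENNReal.tsum_const_eq_top_of_ne_zero hc).symm
    _ ≤ ∑' n, ∫⁻ x in S n, f x ∂μ := ENNReal.tsum_le_tsum hc_le
    _ = ∫⁻ x in ⋃ n, S n, f x ∂μ := (lintegral_iUnion hS hdisj f).symm
    _ ≤ ∫⁻ x in s, f x ∂μ := lintegral_mono_set (iUnion_subset hSs)

def boxAbove (q : ℝ) : Set (ℝ × ℝ) := Ioo 0 q ×ˢ Ioo q (2 * q)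

lemma measurableSet_boxAbove (q : ℝ) : MeasurableSet (boxAbove q) :=
  measurableSet_Ioo.prod measurableSet_Ioo

lemma volume_boxAbove (q : ℝ) : volume (boxAbove q) = ENNReal.ofReal q * ENNReal.ofReal q := by
  rw [boxAbove, Measure.volume_eq_prod, Measure.prod_prod, Real.volume_Ioo, Real.volume_Ioo]
  ring_nf

lemma disjoint_boxAbove {q q' : ℝ} (h : 2 * q' ≤ q) : Disjoint (boxAbove q) (boxAbove q') :=
  Set.disjoint_left.mpr fun _ hx hx' => by linarith [hx.2.1, hx'.2.2]

lemma radOf_sq_lt_of_mem_boxAbove {q : ℝ} {p : ℝ × ℝ} (hp : p ∈ boxAbove q) :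
    radOf p ^ 2 < 5 * q ^ 2 := by
  obtain ⟨⟨h1, h2⟩, h3, h4⟩ := hp
  rw [radOf, Real.sq_sqrt (by positivity)]
  nlinarith

lemma boxAbove_subset_sector {α q : ℝ} (hα0 : 0 < α) (hα1 : α ≤ 1) (hq : q ≤ 1 / 16) :
    boxAbove q ⊆ sector α := fun p hp => by
  have hq0 : 0 < q := hp.1.1.trans hp.1.2
  have hr5 := radOf_sq_lt_of_mem_boxAbove hp
  exact mem_sector_of_snd_pos hα0 hα1 (hq0.trans hp.2.1)
    (by nlinarith [(radOf_pos_of_snd_pos (hq0.trans hp.2.1)).le])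

lemma inv_sq_le_weighted_sq_uex_of_mem_boxAbove {α β q : ℝ} (hα1 : 1 / 2 ≤ α) (hα2 : α ≤ 1)
    (hβ : 1 / 2 ≤ β) (hq : q ≤ 1 / 16) {p : ℝ × ℝ} (hp : p ∈ boxAbove q) :
    (400 * q ^ 2)⁻¹ ≤ Metric.infDist p (frontier (sector α)) ^ (-(2 * β)) * uex α p ^ 2 := by
  have hy : q < p.2 := hp.2.1
  have hq0 : 0 < q := hp.1.1.trans hp.1.2
  set r := radOf p
  have hr0 : 0 < r := radOf_pos_of_snd_pos (hq0.trans hy)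
  have hr5 : r ^ 2 < 5 * q ^ 2 := radOf_sq_lt_of_mem_boxAbove hp
  have hr : r ≤ 1 / 4 := by nlinarith
  have hα0 : 0 < α := by linarith
  have hρ := infDist_frontier_sector_pos hα0 hα2 (hq0.trans hy) (by linarith)
  calc (400 * q ^ 2)⁻¹ ≤ p.2 ^ 2 / (16 * (r ^ 2) ^ 2) := by
        have hr4 : (r ^ 2) ^ 2 < (5 * q ^ 2) ^ 2 := by gcongr
        have hy2 : q ^ 2 < p.2 ^ 2 := by gcongr
        rw [inv_eq_one_div, div_le_div_iff₀ (by positivity) (by positivity)]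
        nlinarith
    _ = r⁻¹ * (p.2 ^ 2 / (16 * r ^ 3)) := by field_simp
    _ ≤ _ := mul_le_mul (inv_le_rpow_neg hρ (infDist_frontier_sector_le_radOf hα0 p)
          (by linarith) (by linarith)) (sq_snd_div_le_sq_uex hα1 hα2 (hq0.trans hy) hr)
          (by positivity) (Real.rpow_nonneg Metric.infDist_nonneg _)

lemma ofReal_le_setLIntegral_boxAbove {α β q : ℝ} (hα1 : 1 / 2 ≤ α) (hα2 : α ≤ 1)
    (hβ : 1 / 2 ≤ β) (hq0 : 0 < q) (hq : q ≤ 1 / 16) :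
    ENNReal.ofReal (1 / 400) ≤ ∫⁻ x in boxAbove q,
      ENNReal.ofReal (Metric.infDist x (frontier (sector α)) ^ (-(2 * β)) * uex α x ^ 2) :=
  calc ENNReal.ofReal (1 / 400) = ∫⁻ _ in boxAbove q, ENNReal.ofReal (400 * q ^ 2)⁻¹ := by
        rw [setLIntegral_const, volume_boxAbove, ← ENNReal.ofReal_mul (by positivity),
          ← ENNReal.ofReal_mul (by positivity)]
        congr 1
        field_simp
    _ ≤ _ := setLIntegral_mono' (measurableSet_boxAbove q) fun x hx => ENNReal.ofReal_le_ofReal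
        (inv_sq_le_weighted_sq_uex_of_mem_boxAbove hα1 hα2 hβ hq hx)

/-- for every `β ≥ 1/2`, `∫_Ω ϱ^{-2β} |u|² = ∞`, where `ϱ` is the
distance to the boundary of the sector; i.e. `u ∉ L²_{1/ϱ^β}(Ω)`. -/
theorem uex_not_in_weighted_L2 (α : ℝ) (hα1 : 1/2 < α) (hα2 : α < 1)
    (β : ℝ) (hβ : 1/2 ≤ β) :
    (∫⁻ x in sector α,
      ENNReal.ofReal ((Metric.infDist x (frontier (sector α))) ^ (-(2*β))
        * (uex α x) ^ 2)) = ⊤ := by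
  set q : ℕ → ℝ := fun n => (1 / 2) ^ (n + 4)
  have hq0 : ∀ n, 0 < q n := fun n => by positivity
  have hq : ∀ n, q n ≤ 1 / 16 := fun n =>
    (pow_le_pow_of_le_one (by norm_num) (by norm_num) (by omega : 4 ≤ n + 4)).trans_eq
      (by norm_num)
  have hdisj : Pairwise (Function.onFun Disjoint fun n => boxAbove (q n)) :=
    (pairwise_disjoint_on _).mpr fun m n hmn => disjoint_boxAbove <| by
      calc 2 * q n ≤ 2 * q (m + 1) := by
            gcongr
            exact pow_le_pow_of_le_one (by norm_num) (by norm_num) (Nat.add_le_add_right hmn 4)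
        _ = q m := by simp only [q]; ring
  exact setLIntegral_eq_top_of_disjoint (fun n => measurableSet_boxAbove _) hdisj
    (fun n => boxAbove_subset_sector (by linarith) hα2.le (hq n)) (by norm_num)
    fun n => ofReal_le_setLIntegral_boxAbove hα1.le hα2.le hβ (hq0 n) (hq n)
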